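/- arXiv:1804.09653 — 2 statements merged into one kernel-verified Lean document; each statement's English description precedes it below -/
import Mathlib

section
/- Let P be a finite nonempty set of points in ℝ^d, and let c_P be the center and r_P the radius of its minimum enclosing ball. Then for any point p ∈ ℝ^d at distance K = ‖p − c_P‖ from c_P, there exists a point q ∈ P such that ‖p − q‖ ≥ √(r_P² + K²). -/
/-!
If no point of `P` on the boundary sphere of the minimum enclosing ball lay in the closed
halfspace `⟪q - c, u⟫ ≤ 0`, then moving the center a little in the direction `u` would put the
finite set `P` inside a strictly smaller ball. So for `u = p - c` some `q ∈ P` has `‖q - c‖ = r`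
and `⟪p - c, q - c⟫ ≤ 0`, and expanding `‖(p - c) - (q - c)‖²` gives `‖p - q‖² ≥ r² + ‖p - c‖²`.
-/

/-- `IsMEB P c r` says the closed ball of center `c` and radius `r` is the minimum enclosing
ball of `P`: it contains `P`, and any ball containing `P` has radius at least `r`. -/
def IsMEB {d : ℕ} (P : Set (EuclideanSpace ℝ (Fin d)))
    (c : EuclideanSpace ℝ (Fin d)) (r : ℝ) : Prop :=
  (∀ p ∈ P, dist p c ≤ r) ∧
    ∀ (c' : EuclideanSpace ℝ (Fin d)) (r' : ℝ), (∀ p ∈ P, dist p c' ≤ r') → r ≤ r'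

open Filter Topology RealInnerProductSpace

lemma eventually_dist_add_smul_lt {E : Type*} [NormedAddCommGroup E] [NormedSpace ℝ E]
    {q c u : E} {r : ℝ} (h : dist q c < r) : ∀ᶠ ε in 𝓝[>] (0 : ℝ), dist q (c + ε • u) < r :=
  nhdsWithin_le_nhds <| Continuous.tendsto (by fun_prop) 0 |>.eventually_lt_const (by simpa using h)

section InnerProductSpace

variable {E : Type*} [NormedAddCommGroup E] [InnerProductSpace ℝ E]

lemma dist_sq_add_dist_sq_le_dist_sq {a b c : E} (h : ⟪a - c, b - c⟫ ≤ 0) :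
    dist a c ^ 2 + dist b c ^ 2 ≤ dist a b ^ 2 := by
  have hab : a - b = (a - c) - (b - c) := by abel
  simp only [dist_eq_norm]
  rw [hab, norm_sub_sq_real (a - c) (b - c)]
  linarith

lemma dist_add_smul_sq (q c u : E) (ε : ℝ) :
    dist q (c + ε • u) ^ 2 = dist q c ^ 2 - ε * (2 * ⟪q - c, u⟫ - ε * ‖u‖ ^ 2) := by
  have h : q - (c + ε • u) = (q - c) - ε • u := by abel
  rw [dist_eq_norm, dist_eq_norm, h, norm_sub_sq_real, real_inner_smul_right, norm_smul,
    Real.norm_eq_abs, mul_pow, sq_abs]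
  ring

lemma eventually_dist_add_smul_lt_dist {q c u : E} (h : 0 < ⟪q - c, u⟫) :
    ∀ᶠ ε in 𝓝[>] (0 : ℝ), dist q (c + ε • u) < dist q c := by
  have hsmall : ∀ᶠ ε in 𝓝[>] (0 : ℝ), ε * ‖u‖ ^ 2 < 2 * ⟪q - c, u⟫ := by
    refine nhdsWithin_le_nhds (Continuous.tendsto (by fun_prop) 0 |>.eventually_lt_const ?_)
    simpa using h
  filter_upwards [hsmall, self_mem_nhdsWithin] with ε hε (hε0 : 0 < ε)
  have hsq : dist q (c + ε • u) ^ 2 < dist q c ^ 2 := by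
    rw [dist_add_smul_sq]
    nlinarith
  exact (pow_lt_pow_iff_left₀ dist_nonneg dist_nonneg two_ne_zero).1 hsq

lemma Set.Finite.exists_forall_dist_lt {P : Set E} (hP : P.Finite) {c u : E} {r : ℝ}
    (hball : ∀ q ∈ P, dist q c ≤ r) (hsphere : ∀ q ∈ P, dist q c = r → 0 < ⟪q - c, u⟫) :
    ∃ c' : E, ∀ q ∈ P, dist q c' < r := by
  have : ∀ᶠ ε in 𝓝[>] (0 : ℝ), ∀ q ∈ P, dist q (c + ε • u) < r := by
    refine hP.eventually_all.2 fun q hq => ?_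
    rcases (hball q hq).lt_or_eq with hlt | heq
    · exact eventually_dist_add_smul_lt hlt
    · exact heq ▸ eventually_dist_add_smul_lt_dist (hsphere q hq heq)
  obtain ⟨ε, hε⟩ := this.exists
  exact ⟨c + ε • u, hε⟩

end InnerProductSpace

lemma Set.Finite.exists_lt_forall_le {α : Type*} {P : Set α} (hP : P.Finite) {f : α → ℝ} {r : ℝ}
    (h : ∀ q ∈ P, f q < r) : ∃ r' < r, ∀ q ∈ P, f q ≤ r' := by
  have : ∀ᶠ r' in 𝓝[<] r, ∀ q ∈ P, f q < r' :=
    hP.eventually_all.2 fun q hq => nhdsWithin_le_nhds (eventually_gt_nhds (h q hq))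
  obtain ⟨r', hf, hr'⟩ := (this.and self_mem_nhdsWithin).exists
  exact ⟨r', hr', fun q hq => (hf q hq).le⟩

lemma IsMEB.exists_dist_eq_inner_nonpos {d : ℕ} {P : Set (EuclideanSpace ℝ (Fin d))}
    {c : EuclideanSpace ℝ (Fin d)} {r : ℝ} (hmeb : IsMEB P c r) (hP : P.Finite)
    (u : EuclideanSpace ℝ (Fin d)) : ∃ q ∈ P, dist q c = r ∧ ⟪q - c, u⟫ ≤ 0 := by
  by_contra! hsphere
  obtain ⟨c', hc'⟩ := hP.exists_forall_dist_lt hmeb.1 hsphere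
  obtain ⟨r', hr', hle⟩ := hP.exists_lt_forall_le hc'
  exact (hmeb.2 c' r' hle).not_gt hr'

theorem exists_far_point_of_meb_general {d : ℕ}
    (P : Set (EuclideanSpace ℝ (Fin d))) (hfin : P.Finite)
    (cP : EuclideanSpace ℝ (Fin d)) (rP : ℝ) (hmeb : IsMEB P cP rP)
    (p : EuclideanSpace ℝ (Fin d)) :
    ∃ q ∈ P, Real.sqrt (rP ^ 2 + (dist p cP) ^ 2) ≤ dist p q := by
  obtain ⟨q, hqP, hqr, hqu⟩ := hmeb.exists_dist_eq_inner_nonpos hfin (p - cP)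
  refine ⟨q, hqP, Real.sqrt_le_iff.2 ⟨dist_nonneg, ?_⟩⟩
  have := dist_sq_add_dist_sq_le_dist_sq (real_inner_comm (p - cP) (q - cP) ▸ hqu)
  rw [hqr] at this
  linarith

/-- if `c_P` and `r_P` are the center and radius of the minimum enclosing ball of
a finite nonempty set `P`, then for any point `p` with `K = ‖p − c_P‖`, some `q ∈ P` satisfies
`‖p − q‖ ≥ √(r_P² + K²)`. -/
theorem exists_far_point_of_meb {d : ℕ}
    (P : Set (EuclideanSpace ℝ (Fin d))) (hfin : P.Finite) (hne : P.Nonempty)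
    (cP : EuclideanSpace ℝ (Fin d)) (rP : ℝ) (hmeb : IsMEB P cP rP)
    (p : EuclideanSpace ℝ (Fin d)) :
    ∃ q ∈ P, Real.sqrt (rP ^ 2 + (dist p cP) ^ 2) ≤ dist p q :=
  exists_far_point_of_meb_general P hfin cP rP hmeb p
end

section
/- Let p_1, …, p_h be points in ℝ^d with h ≥ 2, let R̂ > 0, and for each i with 1 ≤ i ≤ h let c_i and r_i be the center and radius of the minimum enclosing ball of {p_1, …, p_i}. If ‖p_{i+1} − c_i‖ > R̂ for every i with 1 ≤ i ≤ h−1, then r_h > (1 − 2/(h+1))·R̂. -/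
/-!
Let `B(c, r)` be the minimum enclosing ball of `P`. If `B(c', t)` also covers `P`, then
`r² + ‖c − c'‖² ≤ t²`: the balls around the points `(1 − θ) c + θ c'` of squared radius
`(1 − θ) r² + θ t² − θ (1 − θ) ‖c − c'‖²` cover `P`, and letting `θ → 0⁺` in the minimality of `r`
gives the claim. If moreover `B(c', t)` contains a point `q` at distance `D ≥ r` from `c`, the
triangle inequality `D ≤ t + ‖c − c'‖` turns this into `r² + D² ≤ 2 D t`. For consecutive prefixes
with `r_i ≤ R < D` this yields `r_{i+1} > (r_i² + R²) / (2R)`, and this recurrence, started from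
`r_1 ≥ 0`, pushes `r_i` above `(1 − 2/(i+1)) R`.
-/

open Set Filter Topology

theorem dist_lineMap_sq {E : Type*} [NormedAddCommGroup E] [InnerProductSpace ℝ E]
    (q a b : E) (θ : ℝ) :
    dist q (AffineMap.lineMap a b θ) ^ 2 =
      (1 - θ) * dist q a ^ 2 + θ * dist q b ^ 2 - θ * (1 - θ) * dist a b ^ 2 := by
  have hsplit : q - AffineMap.lineMap a b θ = (1 - θ) • (q - a) + θ • (q - b) := by
    rw [AffineMap.lineMap_apply_module]; module
  have hdiff : (q - a) - (q - b) = b - a := by abel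
  rw [dist_eq_norm, dist_eq_norm, dist_eq_norm, dist_eq_norm', hsplit, ← hdiff,
    norm_add_sq_real, norm_sub_sq_real (q - a), norm_smul, norm_smul, real_inner_smul_left,
    real_inner_smul_right, Real.norm_eq_abs, Real.norm_eq_abs, mul_pow, mul_pow, sq_abs, sq_abs]
  ring

namespace IsMEB

variable {d : ℕ} {P Q : Set (EuclideanSpace ℝ (Fin d))} {c c' q : EuclideanSpace ℝ (Fin d)}
  {r r' : ℝ}

theorem nonempty (hm : IsMEB P c r) : P.Nonempty := by
  rw [nonempty_iff_ne_empty]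
  rintro rfl
  linarith [hm.2 c (r - 1) (by simp)]

theorem nonneg (hm : IsMEB P c r) : 0 ≤ r :=
  let ⟨p, hp⟩ := hm.nonempty
  dist_nonneg.trans (hm.1 p hp)

theorem le_of_subset (hm : IsMEB P c r) (hm' : IsMEB Q c' r') (hPQ : P ⊆ Q) : r ≤ r' :=
  hm.2 c' r' fun p hp => hm'.1 p (hPQ hp)

theorem sq_add_dist_sq_le (hm : IsMEB P c r) (hcov : ∀ p ∈ P, dist p c' ≤ r') :
    r ^ 2 + dist c c' ^ 2 ≤ r' ^ 2 := by
  have hθ : ∀ θ ∈ Ioo (0 : ℝ) 1, r ^ 2 + (1 - θ) * dist c c' ^ 2 ≤ r' ^ 2 := by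
    rintro θ ⟨hθ0, hθ1⟩
    set E := (1 - θ) * r ^ 2 + θ * r' ^ 2 - θ * (1 - θ) * dist c c' ^ 2
    have hE : ∀ p ∈ P, dist p (AffineMap.lineMap c c' θ) ^ 2 ≤ E := by
      intro p hp
      have h₁ := pow_le_pow_left₀ dist_nonneg (hm.1 p hp) 2
      have h₂ := pow_le_pow_left₀ dist_nonneg (hcov p hp) 2
      rw [dist_lineMap_sq]
      nlinarith
    obtain ⟨p, hp⟩ := hm.nonempty
    have hrE : r ^ 2 ≤ E :=
      (Real.le_sqrt hm.nonneg ((sq_nonneg _).trans (hE p hp))).1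
        (hm.2 _ _ fun p hp => Real.le_sqrt_of_sq_le (hE p hp))
    nlinarith
  have hlim : Tendsto (fun θ : ℝ => r ^ 2 + (1 - θ) * dist c c' ^ 2) (𝓝[>] 0)
      (𝓝 (r ^ 2 + dist c c' ^ 2)) := by
    apply tendsto_nhdsWithin_of_tendsto_nhds
    exact Continuous.tendsto' (by fun_prop) 0 _ (by simp)
  exact le_of_tendsto hlim (eventually_of_mem (Ioo_mem_nhdsGT one_pos) hθ)

theorem sq_add_dist_sq_le_two_mul (hm : IsMEB P c r) (hP : ∀ p ∈ P, dist p c' ≤ r')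
    (hq : dist q c' ≤ r') (hrq : r ≤ dist q c) :
    r ^ 2 + dist q c ^ 2 ≤ 2 * dist q c * r' := by
  have hstab := hm.sq_add_dist_sq_le hP
  have htri : dist q c ≤ r' + dist c c' := by
    linarith [dist_triangle_right q c c', dist_comm c c']
  have hrr' : r ≤ r' := hm.2 c' r' hP
  have hr := hm.nonneg
  rcases le_or_gt (dist q c) r' with hle | hgt
  · nlinarith
  · nlinarith [dist_nonneg (x := c) (y := c')]

theorem sq_add_sq_lt_two_mul {R : ℝ} (hm : IsMEB P c r) (hP : ∀ p ∈ P, dist p c' ≤ r')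
    (hq : dist q c' ≤ r') (hR : 0 < R) (hrR : r ≤ R) (hRq : R < dist q c) :
    r ^ 2 + R ^ 2 < 2 * R * r' := by
  have key := hm.sq_add_dist_sq_le_two_mul hP hq (hrR.trans hRq.le)
  have hr := hm.nonneg
  -- `x ↦ (r² + x²) / x` is increasing on `x ≥ r`, and `R < dist q c`
  have hmono : 0 < (dist q c - R) * (R * dist q c - r ^ 2) := by
    apply mul_pos (by linarith); nlinarith
  nlinarith

end IsMEB

theorem one_sub_two_div_mul_lt_of_step {R x y n : ℝ} (hR : 0 < R) (hn : 1 ≤ n)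
    (hx : (1 - 2 / (n + 1)) * R ≤ x) (hxy : x ≤ y) (hstep : x ≤ R → x ^ 2 + R ^ 2 < 2 * R * y) :
    (1 - 2 / (n + 1 + 1)) * R < y := by
  have ha : 0 ≤ 1 - 2 / (n + 1) := by
    rw [sub_nonneg, div_le_one (by linarith)]; linarith
  have hb : 1 - 2 / (n + 1 + 1) < 1 := by
    have : 0 < 2 / (n + 1 + 1) := by positivity
    linarith
  -- `a² + 1 − 2b = 4 / ((n + 1)² (n + 2))` for `a = 1 − 2/(n+1)`, `b = 1 − 2/(n+2)`
  have hab : 2 * (1 - 2 / (n + 1 + 1)) ≤ (1 - 2 / (n + 1)) ^ 2 + 1 := by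
    have h₁ : n + 1 ≠ 0 := by linarith
    have h₂ : n + 1 + 1 ≠ 0 := by linarith
    field_simp
    nlinarith
  rcases le_or_gt x R with hxR | hxR
  · have haR : 0 ≤ (1 - 2 / (n + 1)) * R := mul_nonneg ha hR.le
    have hsq := mul_le_mul hx hx haR (haR.trans hx)
    nlinarith [hstep hxR]
  · nlinarith

theorem one_sub_two_div_mul_lt_of_growth {R : ℝ} (hR : 0 < R) {r : ℕ → ℝ} {h : ℕ}
    (h₁ : 0 ≤ r 1) (hmono : ∀ i, 1 ≤ i → i < h → r i ≤ r (i + 1))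
    (hstep : ∀ i, 1 ≤ i → i < h → r i ≤ R → r i ^ 2 + R ^ 2 < 2 * R * r (i + 1)) :
    ∀ i, 2 ≤ i → i ≤ h → (1 - 2 / ((i : ℝ) + 1)) * R < r i := by
  intro i hi
  induction i, hi using Nat.le_induction with
  | base =>
    intro h2
    have := one_sub_two_div_mul_lt_of_step hR le_rfl (x := r 1) (by norm_num [h₁])
      (hmono 1 le_rfl h2) (hstep 1 le_rfl h2)
    norm_num at this ⊢
    exact this
  | succ i hi ih =>
    intro hih
    have := one_sub_two_div_mul_lt_of_step hR (by exact_mod_cast (by omega : 1 ≤ i))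
      (ih (by omega)).le (hmono i (by omega) hih) (hstep i (by omega) hih)
    push_cast
    exact this

/-- given points `p₁, …, p_h` with `h ≥ 2` and `R̂ > 0`, if `c_i, r_i` are the
MEB center and radius of `{p₁, …, p_i}` for each `1 ≤ i ≤ h`, and `‖p_{i+1} − c_i‖ > R̂` for
every `1 ≤ i ≤ h − 1`, then `r_h > (1 − 2/(h+1))·R̂`. -/
theorem coreset_growth {d : ℕ} (h : ℕ) (hh : 2 ≤ h)
    (p : ℕ → EuclideanSpace ℝ (Fin d)) (R : ℝ) (hR : 0 < R)
    (c : ℕ → EuclideanSpace ℝ (Fin d)) (r : ℕ → ℝ)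
    (hmeb : ∀ i : ℕ, 1 ≤ i → i ≤ h → IsMEB (p '' Set.Icc 1 i) (c i) (r i))
    (hfar : ∀ i : ℕ, 1 ≤ i → i ≤ h - 1 → R < dist (p (i + 1)) (c i)) :
    (1 - 2 / ((h : ℝ) + 1)) * R < r h := by
  have hsub (i : ℕ) : p '' Icc 1 i ⊆ p '' Icc 1 (i + 1) :=
    image_mono (Icc_subset_Icc_right i.le_succ)
  refine one_sub_two_div_mul_lt_of_growth hR (hmeb 1 le_rfl (by omega)).nonneg
    (fun i hi hih => (hmeb i hi hih.le).le_of_subset (hmeb (i + 1) (by omega) hih) (hsub i))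
    (fun i hi hih hrR => ?_) h hh le_rfl
  have hnext := hmeb (i + 1) (by omega) hih
  exact (hmeb i hi hih.le).sq_add_sq_lt_two_mul (fun x hx => hnext.1 x (hsub i hx))
    (hnext.1 _ (mem_image_of_mem p ⟨by omega, le_rfl⟩)) hR hrR (hfar i hi (by omega))
end
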